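/- Let μ > 0, r = (r₀, r₁) ∈ Δ_m × Δ_n, and let (x*, y*) be a saddle point of the regularized objective f_r on Δ_m × Δ_n. Then for every profile (x, y) ∈ Δ_m × Δ_n, ⟨x, A y*⟩ + ⟨y, −Aᵀ x*⟩ ≥ μ·( ⟨x* − x, x* − r₀⟩ + ⟨y* − y, y* − r₁⟩ ). -/
import Mathlib


open Finset

/-- Squared Euclidean norm of a vector in `ℝ^d`. -/
noncomputable def sqnorm {d : ℕ} (v : Fin d → ℝ) : ℝ := ∑ i, (v i) ^ 2

/-- Euclidean norm `‖·‖₂` of a vector in `ℝ^d`. -/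
noncomputable def enorm2 {d : ℕ} (v : Fin d → ℝ) : ℝ := Real.sqrt (sqnorm v)

/-- Euclidean inner product on `ℝ^d`. -/
noncomputable def ip {d : ℕ} (u v : Fin d → ℝ) : ℝ := ∑ i, u i * v i

/-- The max-player's payoff `⟨x, A y⟩` in the two-player zero-sum game with payoff matrix `A`. -/
noncomputable def pay {m n : ℕ} (A : Matrix (Fin m) (Fin n) ℝ)
    (x : Fin m → ℝ) (y : Fin n → ℝ) : ℝ := ip x (A.mulVec y)

/-- The regularized objective `f_r(x,y) = ⟨x, A y⟩ + (μ/2)‖x − r₀‖₂² − (μ/2)‖y − r₁‖₂²`. -/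
noncomputable def freg {m n : ℕ} (A : Matrix (Fin m) (Fin n) ℝ) (μ : ℝ)
    (r₀ : Fin m → ℝ) (r₁ : Fin n → ℝ) (x : Fin m → ℝ) (y : Fin n → ℝ) : ℝ :=
  pay A x y + (μ / 2) * sqnorm (x - r₀) - (μ / 2) * sqnorm (y - r₁)

/-- `(xs, ys)` is a saddle point of `f_r` on `Δ_m × Δ_n`. -/
def IsSaddle {m n : ℕ} (A : Matrix (Fin m) (Fin n) ℝ) (μ : ℝ)
    (r₀ : Fin m → ℝ) (r₁ : Fin n → ℝ) (xs : Fin m → ℝ) (ys : Fin n → ℝ) : Prop :=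
  xs ∈ stdSimplex ℝ (Fin m) ∧ ys ∈ stdSimplex ℝ (Fin n) ∧
  ∀ x ∈ stdSimplex ℝ (Fin m), ∀ y ∈ stdSimplex ℝ (Fin n),
    freg A μ r₀ r₁ xs y ≤ freg A μ r₀ r₁ xs ys ∧
    freg A μ r₀ r₁ xs ys ≤ freg A μ r₀ r₁ x ys

lemma sqnorm_nonneg {d : ℕ} (v : Fin d → ℝ) : 0 ≤ sqnorm v :=
  Finset.sum_nonneg fun i _ => sq_nonneg _


lemma ip_sub_left {d : ℕ} (u v w : Fin d → ℝ) : ip (u - v) w = ip u w - ip v w := by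
  simp [ip, sub_mul, Finset.sum_sub_distrib]

lemma ip_neg_right {d : ℕ} (u v : Fin d → ℝ) : ip u (-v) = -ip u v := by
  simp [ip, Finset.sum_neg_distrib]

lemma ip_transpose {m n : ℕ} (A : Matrix (Fin m) (Fin n) ℝ) (u : Fin m → ℝ) (v : Fin n → ℝ) :
    ip u (A.mulVec v) = ip v (A.transpose.mulVec u) := by
  simp only [ip, Matrix.mulVec, dotProduct, Finset.mul_sum, Matrix.transpose_apply]
  rw [Finset.sum_comm]
  apply Finset.sum_congr rfl; intro j _; apply Finset.sum_congr rfl; intro i _; ring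

lemma pay_line_left {m n : ℕ} (A : Matrix (Fin m) (Fin n) ℝ) (xs d : Fin m → ℝ) (ys : Fin n → ℝ)
    (t : ℝ) : pay A (xs + t • d) ys = pay A xs ys + t * ip d (A.mulVec ys) := by
  simp only [pay, ip, Pi.add_apply, Pi.smul_apply, smul_eq_mul, Finset.mul_sum,
    ← Finset.sum_add_distrib]
  apply Finset.sum_congr rfl; intro i _; ring

lemma pay_line_right {m n : ℕ} (A : Matrix (Fin m) (Fin n) ℝ) (xs : Fin m → ℝ) (ys d : Fin n → ℝ)
    (t : ℝ) : pay A xs (ys + t • d) = pay A xs ys + t * ip d (A.transpose.mulVec xs) := by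
  rw [← ip_transpose]
  simp only [pay, ip, Matrix.mulVec, dotProduct, Pi.add_apply, Pi.smul_apply, smul_eq_mul,
    Finset.mul_sum]
  rw [← Finset.sum_add_distrib]
  apply Finset.sum_congr rfl; intro i _
  rw [← Finset.sum_add_distrib]
  apply Finset.sum_congr rfl; intro j _; ring

lemma sq_line {d : ℕ} (xs dd r : Fin d → ℝ) (t : ℝ) :
    sqnorm (xs + t • dd - r) = sqnorm (xs - r) + 2 * t * ip dd (xs - r) + t ^ 2 * sqnorm dd := by
  simp only [sqnorm, ip, Pi.add_apply, Pi.sub_apply, Pi.smul_apply, smul_eq_mul,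
    Finset.mul_sum, ← Finset.sum_add_distrib]
  apply Finset.sum_congr rfl; intro i _; ring

lemma nonneg_of_line (C D : ℝ) (hC : 0 ≤ C)
    (h : ∀ t : ℝ, 0 < t → t ≤ 1 → 0 ≤ t * D + t ^ 2 * C) : 0 ≤ D := by
  by_contra hD
  push_neg at hD
  rcases lt_or_eq_of_le hC with hC' | hC'
  · set t := min 1 (-D / (2 * C)) with ht
    have htpos : 0 < t := lt_min one_pos (div_pos (by linarith) (by linarith))
    have ht1 : t ≤ 1 := min_le_left _ _
    have h2 : t * C ≤ -D / 2 := by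
      have : t ≤ -D / (2 * C) := min_le_right _ _
      calc t * C ≤ (-D / (2 * C)) * C := by nlinarith
        _ = -D / 2 := by field_simp
    have := h t htpos ht1
    nlinarith
  · have := h 1 one_pos le_rfl
    nlinarith

lemma mem_line {d : ℕ} (xs x : Fin d → ℝ) (hxs : xs ∈ stdSimplex ℝ (Fin d))
    (hx : x ∈ stdSimplex ℝ (Fin d)) (t : ℝ) (h0 : 0 < t) (h1 : t ≤ 1) :
    xs + t • (x - xs) ∈ stdSimplex ℝ (Fin d) := by
  have := (convex_stdSimplex ℝ (Fin d)) hxs hx (by linarith : (0:ℝ) ≤ 1 - t) h0.le (by ring)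
  convert this using 1
  funext i
  simp [Pi.add_apply]
  ring


/-- if `(x*, y*)` is a saddle point of the regularized objective `f_r`, then for
every profile `(x, y) ∈ Δ_m × Δ_n`,
`⟨x, A y*⟩ + ⟨y, −Aᵀ x*⟩ ≥ μ(⟨x* − x, x* − r₀⟩ + ⟨y* − y, y* − r₁⟩)`. -/
theorem saddle_point_value_relationship
    (m n : ℕ) (hm : 1 ≤ m) (hn : 1 ≤ n) (A : Matrix (Fin m) (Fin n) ℝ)
    (μ : ℝ) (hμ : 0 < μ)
    (r₀ : Fin m → ℝ) (r₁ : Fin n → ℝ)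
    (hr₀ : r₀ ∈ stdSimplex ℝ (Fin m)) (hr₁ : r₁ ∈ stdSimplex ℝ (Fin n))
    (xs : Fin m → ℝ) (ys : Fin n → ℝ) (hsaddle : IsSaddle A μ r₀ r₁ xs ys) :
    ∀ x ∈ stdSimplex ℝ (Fin m), ∀ y ∈ stdSimplex ℝ (Fin n),
      μ * (ip (xs - x) (xs - r₀) + ip (ys - y) (ys - r₁)) ≤
        ip x (A.mulVec ys) + ip y (-(A.transpose.mulVec xs)) := by
  obtain ⟨hxs, hys, hsp⟩ := hsaddle
  intro x hx y hy
  have hDx : 0 ≤ ip (x - xs) (A.mulVec ys) + μ * ip (x - xs) (xs - r₀) := by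
    apply nonneg_of_line ((μ / 2) * sqnorm (x - xs)) _
      (by have := sqnorm_nonneg (x - xs); positivity)
    intro t h0 h1
    have hmem := mem_line xs x hxs hx t h0 h1
    have hle := (hsp _ hmem ys hys).2
    simp only [freg, pay_line_left, sq_line] at hle
    nlinarith [hle]
  have hDy : 0 ≤ -(ip (y - ys) (A.transpose.mulVec xs)) + μ * ip (y - ys) (ys - r₁) := by
    apply nonneg_of_line ((μ / 2) * sqnorm (y - ys)) _
      (by have := sqnorm_nonneg (y - ys); positivity)
    intro t h0 h1
    have hmem := mem_line ys y hys hy t h0 h1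
    have hle := (hsp xs hxs _ hmem).1
    simp only [freg, pay_line_right, sq_line] at hle
    nlinarith [hle]
  have h1 := ip_sub_left x xs (A.mulVec ys)
  have h2 := ip_sub_left y ys (A.transpose.mulVec xs)
  have h3 := ip_sub_left x xs (xs - r₀)
  have h4 := ip_sub_left xs x (xs - r₀)
  have h5 := ip_sub_left y ys (ys - r₁)
  have h6 := ip_sub_left ys y (ys - r₁)
  have h7 := ip_transpose A xs ys
  have h8 := ip_neg_right y (A.transpose.mulVec xs)
  rw [h1, h3] at hDx
  rw [h2, h5] at hDy
  rw [h4, h6, h8]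
  ring_nf at hDx hDy ⊢
  linarith
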